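/- arXiv:2311.01568 — 2 statements merged into one kernel-verified Lean document; each statement's English description precedes it below -/
import Mathlib

section
/- Suppose every per-round cost satisfies c_i(x,a) ≥ ε ≥ 0 and the per-round cost differences satisfy |c_i - c†_i| ≤ Σ_{j=1}^{i} q_{j,i} d_j for nonnegative weights q_{j,i} and action deviations d_j ≥ 0. Then for every h' ∈ [H], the condition Σ_{j=1}^{h'} Γ_{j,j} d_j ≤ h'(λε + b), where Γ_{j,j} = Σ_{i=j}^{H} q_{j,i}, implies the anytime competitive constraint Σ_{i=1}^{h'} c_i ≤ (1+λ) Σ_{i=1}^{h'} c†_i + h' b. -/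
/-!
Round i's excess cost c_i - c†_i is charged to the deviations d_j of the rounds j ≤ i, so
exchanging the order of summation charges d_j with total weight Σ_{i=j}^{h'} q_{j,i} ≤ Γ_j.
The condition then bounds the total excess by h'(λε + b), and h'λε ≤ λ Σ c†_i because every
prior cost is at least ε.
-/

open Finset

theorem sum_Icc_sum_Icc_comm {M : Type*} [AddCommMonoid M] (a n : ℕ) (f : ℕ → ℕ → M) :
    ∑ i ∈ Icc a n, ∑ j ∈ Icc a i, f j i = ∑ j ∈ Icc a n, ∑ i ∈ Icc j n, f j i :=
  sum_comm' fun i j => by simp only [mem_Icc]; omega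

theorem sum_sub_le_sum_mul_deviation {m H : ℕ} (hm : m ≤ H) {c cd d : ℕ → ℝ}
    {q : ℕ → ℕ → ℝ} (hq : ∀ j i, 0 ≤ q j i) (hd : ∀ j, 0 ≤ d j)
    (hdiff : ∀ i ∈ Icc 1 m, c i - cd i ≤ ∑ j ∈ Icc 1 i, q j i * d j) :
    ∑ i ∈ Icc 1 m, (c i - cd i) ≤ ∑ j ∈ Icc 1 m, (∑ i ∈ Icc j H, q j i) * d j :=
  calc ∑ i ∈ Icc 1 m, (c i - cd i)
      ≤ ∑ i ∈ Icc 1 m, ∑ j ∈ Icc 1 i, q j i * d j := sum_le_sum hdiff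
    _ = ∑ j ∈ Icc 1 m, (∑ i ∈ Icc j m, q j i) * d j := by
      simp only [sum_mul]
      exact sum_Icc_sum_Icc_comm 1 m _
    _ ≤ ∑ j ∈ Icc 1 m, (∑ i ∈ Icc j H, q j i) * d j :=
      sum_le_sum fun j _ => mul_le_mul_of_nonneg_right
        (sum_le_sum_of_subset_of_nonneg (Icc_subset_Icc_right hm) fun i _ _ => hq j i) (hd j)

theorem stmt2_general (H : ℕ) (ε lam b : ℝ) (c cd d : ℕ → ℝ) (q : ℕ → ℕ → ℝ)
    (hlam : 0 ≤ lam)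
    (hq : ∀ j i, 0 ≤ q j i) (hd : ∀ j, 0 ≤ d j)
    (hcd : ∀ i, ε ≤ cd i)
    (hdiff : ∀ i ∈ Finset.Icc 1 H, |c i - cd i| ≤ ∑ j ∈ Finset.Icc 1 i, q j i * d j)
    (Γ : ℕ → ℝ) (hΓ : ∀ j, Γ j = ∑ i ∈ Finset.Icc j H, q j i)
    (h' : ℕ) (hh' : h' ∈ Finset.Icc 1 H)
    (hcond : ∑ j ∈ Finset.Icc 1 h', Γ j * d j ≤ (h' : ℝ) * (lam * ε + b)) :
    ∑ i ∈ Finset.Icc 1 h', c i ≤ (1 + lam) * ∑ i ∈ Finset.Icc 1 h', cd i + (h' : ℝ) * b := by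
  have hh'H : h' ≤ H := (mem_Icc.mp hh').2
  have hexcess : ∑ i ∈ Icc 1 h', (c i - cd i) ≤ h' * (lam * ε + b) := by
    refine (sum_sub_le_sum_mul_deviation hh'H hq hd fun i hi => ?_).trans ?_
    · exact (le_abs_self _).trans (hdiff i (Icc_subset_Icc_right hh'H hi))
    · simpa only [← hΓ] using hcond
  have hprior : (h' : ℝ) * ε ≤ ∑ i ∈ Icc 1 h', cd i := by
    simpa using card_nsmul_le_sum (Icc 1 h') cd ε fun i _ => hcd i
  rw [sum_sub_distrib] at hexcess
  nlinarith [mul_le_mul_of_nonneg_left hprior hlam]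

/-- The initialization-only sufficient condition implies the anytime competitive constraint. -/
theorem stmt2 (H : ℕ) (ε lam b : ℝ) (c cd d : ℕ → ℝ) (q : ℕ → ℕ → ℝ)
    (hε : 0 ≤ ε) (hlam : 0 ≤ lam) (hb : 0 ≤ b)
    (hq : ∀ j i, 0 ≤ q j i) (hd : ∀ j, 0 ≤ d j)
    (hc : ∀ i, ε ≤ c i) (hcd : ∀ i, ε ≤ cd i)
    (hdiff : ∀ i ∈ Finset.Icc 1 H, |c i - cd i| ≤ ∑ j ∈ Finset.Icc 1 i, q j i * d j)
    (Γ : ℕ → ℝ) (hΓ : ∀ j, Γ j = ∑ i ∈ Finset.Icc j H, q j i)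
    (h' : ℕ) (hh' : h' ∈ Finset.Icc 1 H)
    (hcond : ∑ j ∈ Finset.Icc 1 h', Γ j * d j ≤ (h' : ℝ) * (lam * ε + b)) :
    ∑ i ∈ Finset.Icc 1 h', c i ≤ (1 + lam) * ∑ i ∈ Finset.Icc 1 h', cd i + (h' : ℝ) * b :=
  stmt2_general H ε lam b c cd d q hlam hq hd hcd hdiff Γ hΓ h' hh' hcond
end

section
/- Suppose per-round costs satisfy c_i ≥ ε and c†_i ≥ ĉ†_i := max{ε, c_i - Σ_{j=1}^{i} q_{j,i} d_j}, and the cost differences satisfy |c_i - c†_i| ≤ Σ_{j=1}^{i} q_{j,i} d_j. Then for any rounds h ≤ h' in [H], the condition Σ_{j=h}^{h'} Γ_{j,j} d_j ≤ Σ_{i=1}^{h-1}((1+λ)ĉ†_i - c_i - Γ_{i,h} d_i) + (h'-h+1)(λε + b) implies the anytime competitive constraint Σ_{i=1}^{h'} c_i ≤ (1+λ) Σ_{i=1}^{h'} c†_i + h' b. -/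
/-!
Split both cumulative costs at round `h`. On rounds `i ∈ [h, h']` the cost gap `c i - c† i` is
at most `∑_{j ≤ i} q j i * d j`; exchanging the order of summation, the deviations of rounds
before `h` are charged to `Γ j h * d j` and those of rounds `j ∈ [h, h']` to `Γ j j * d j`.
The sufficient condition absorbs all of this, using `ĉ† ≤ c†` on the rounds before `h` and
`ε ≤ ĉ† ≤ c†` on the `h' - h + 1` rounds of `[h, h']`.
-/

open Finset

theorem Finset.sum_Icc_one_eq_add {M : Type*} [AddCommMonoid M] (f : ℕ → M) {h n : ℕ}
    (hh : 1 ≤ h) (hn : h ≤ n + 1) :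
    ∑ i ∈ Icc 1 n, f i = ∑ i ∈ Icc 1 (h - 1), f i + ∑ i ∈ Icc h n, f i := by
  rw [← Ico_add_one_right_eq_Icc, ← Ico_add_one_right_eq_Icc,
    ← Ico_add_one_right_eq_Icc, Nat.sub_add_cancel hh, sum_Ico_consecutive _ hh hn]

theorem Finset.sum_Icc_Icc_comm {M : Type*} [AddCommMonoid M] (f : ℕ → ℕ → M) (a b : ℕ) :
    ∑ i ∈ Icc a b, ∑ j ∈ Icc a i, f j i = ∑ j ∈ Icc a b, ∑ i ∈ Icc j b, f j i := by
  simpa only [Ico_add_one_right_eq_Icc] using (sum_Ico_Ico_comm a (b + 1) f).symm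

section Exchange

variable {q : ℕ → ℕ → ℝ} {d : ℕ → ℝ} {H : ℕ}

theorem sum_Icc_mul_le_tail (hq : ∀ j i, 0 ≤ q j i) (hd : ∀ j, 0 ≤ d j) (j n m : ℕ)
    (hm : m ≤ H) : (∑ i ∈ Icc n m, q j i) * d j ≤ (∑ i ∈ Icc n H, q j i) * d j :=
  mul_le_mul_of_nonneg_right
    (sum_le_sum_of_subset_of_nonneg (Icc_subset_Icc_right hm) fun i _ _ => hq j i) (hd j)

theorem sum_Icc_sum_Icc_weighted_le (hq : ∀ j i, 0 ≤ q j i) (hd : ∀ j, 0 ≤ d j)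
    {h h' : ℕ} (h1 : 1 ≤ h) (h3 : h' ≤ H) :
    ∑ i ∈ Icc h h', ∑ j ∈ Icc 1 i, q j i * d j ≤
      ∑ j ∈ Icc 1 (h - 1), (∑ i ∈ Icc h H, q j i) * d j +
        ∑ j ∈ Icc h h', (∑ i ∈ Icc j H, q j i) * d j := by
  have hsplit : ∑ i ∈ Icc h h', ∑ j ∈ Icc 1 i, q j i * d j =
      ∑ j ∈ Icc 1 (h - 1), (∑ i ∈ Icc h h', q j i) * d j +
        ∑ j ∈ Icc h h', (∑ i ∈ Icc j h', q j i) * d j := by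
    rw [sum_congr rfl fun i hi => sum_Icc_one_eq_add _ h1 (by grind),
      sum_add_distrib, sum_comm, sum_Icc_Icc_comm (fun j i => q j i * d j)]
    simp only [sum_mul]
  rw [hsplit]
  exact add_le_add (sum_le_sum fun j _ => sum_Icc_mul_le_tail hq hd j h h' h3)
    (sum_le_sum fun j _ => sum_Icc_mul_le_tail hq hd j j h' h3)

end Exchange

theorem stmt5_general (H : ℕ) (ε lam b : ℝ) (c cd d : ℕ → ℝ) (q : ℕ → ℕ → ℝ)
    (hlam : 0 ≤ lam) (hb : 0 ≤ b)
    (hq : ∀ j i, 0 ≤ q j i) (hd : ∀ j, 0 ≤ d j)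
    (chat : ℕ → ℝ)
    (hchat : ∀ i, chat i = max ε (c i - ∑ j ∈ Finset.Icc 1 i, q j i * d j))
    (hcd : ∀ i, chat i ≤ cd i)
    (hdiff : ∀ i, |c i - cd i| ≤ ∑ j ∈ Finset.Icc 1 i, q j i * d j)
    (Γ : ℕ → ℕ → ℝ) (hΓ : ∀ j n, Γ j n = ∑ i ∈ Finset.Icc n H, q j i)
    (h h' : ℕ) (h1 : 1 ≤ h) (h2 : h ≤ h') (h3 : h' ≤ H)
    (hcond : ∑ j ∈ Finset.Icc h h', Γ j j * d j ≤
      (∑ i ∈ Finset.Icc 1 (h - 1), ((1 + lam) * chat i - c i - Γ i h * d i))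
        + ((h' : ℝ) - (h : ℝ) + 1) * (lam * ε + b)) :
    ∑ i ∈ Finset.Icc 1 h', c i ≤ (1 + lam) * ∑ i ∈ Finset.Icc 1 h', cd i + (h' : ℝ) * b := by
  simp only [hΓ, sum_sub_distrib, ← mul_sum] at hcond
  have hsplit (f : ℕ → ℝ) := sum_Icc_one_eq_add f h1 (by omega : h ≤ h' + 1)
  have hgap : ∑ i ∈ Icc h h', c i ≤
      ∑ i ∈ Icc h h', cd i + ∑ i ∈ Icc h h', ∑ j ∈ Icc 1 i, q j i * d j := by
    rw [← sum_add_distrib]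
    exact sum_le_sum fun i _ => by linarith [(abs_le.mp (hdiff i)).2]
  have hexchange := sum_Icc_sum_Icc_weighted_le hq hd h1 h3
  have hhat : ∑ i ∈ Icc 1 (h - 1), chat i ≤ ∑ i ∈ Icc 1 (h - 1), cd i :=
    sum_le_sum fun i _ => hcd i
  have hfloor : ((h' : ℝ) - h + 1) * ε ≤ ∑ i ∈ Icc h h', cd i := by
    have hcard : ((#(Icc h h') : ℕ) : ℝ) = (h' : ℝ) - h + 1 := by
      rw [Nat.card_Icc, Nat.cast_sub (by omega)]
      push_cast
      ring
    have := card_nsmul_le_sum (Icc h h') cd ε fun i _ =>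
      (hchat i ▸ le_max_left _ _).trans (hcd i)
    rwa [nsmul_eq_mul, hcard] at this
  have hrounds : ((h' : ℝ) - h + 1) * b ≤ h' * b :=
    mul_le_mul_of_nonneg_right (by linarith [show (1 : ℝ) ≤ h by exact_mod_cast h1]) hb
  rw [hsplit c, hsplit cd]
  linarith [mul_le_mul_of_nonneg_left hfloor hlam, mul_le_mul_of_nonneg_left hhat hlam]

/-- The feedback-based sufficient condition at round `h` implies the anytime
competitive constraint at any round `h' ≥ h`. -/
theorem stmt5 (H : ℕ) (ε lam b : ℝ) (c cd d : ℕ → ℝ) (q : ℕ → ℕ → ℝ)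
    (hε : 0 ≤ ε) (hlam : 0 ≤ lam) (hb : 0 ≤ b)
    (hq : ∀ j i, 0 ≤ q j i) (hd : ∀ j, 0 ≤ d j)
    (hc : ∀ i, ε ≤ c i)
    (chat : ℕ → ℝ)
    (hchat : ∀ i, chat i = max ε (c i - ∑ j ∈ Finset.Icc 1 i, q j i * d j))
    (hcd : ∀ i, chat i ≤ cd i)
    (hdiff : ∀ i, |c i - cd i| ≤ ∑ j ∈ Finset.Icc 1 i, q j i * d j)
    (Γ : ℕ → ℕ → ℝ) (hΓ : ∀ j n, Γ j n = ∑ i ∈ Finset.Icc n H, q j i)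
    (h h' : ℕ) (h1 : 1 ≤ h) (h2 : h ≤ h') (h3 : h' ≤ H)
    (hcond : ∑ j ∈ Finset.Icc h h', Γ j j * d j ≤
      (∑ i ∈ Finset.Icc 1 (h - 1), ((1 + lam) * chat i - c i - Γ i h * d i))
        + ((h' : ℝ) - (h : ℝ) + 1) * (lam * ε + b)) :
    ∑ i ∈ Finset.Icc 1 h', c i ≤ (1 + lam) * ∑ i ∈ Finset.Icc 1 h', cd i + (h' : ℝ) * b :=
  stmt5_general H ε lam b c cd d q hlam hb hq hd chat hchat hcd hdiff Γ hΓ h h' h1 h2 h3 hcond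
end
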